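/- arXiv:2201.02720 — 5 statements merged into one kernel-verified Lean document; each statement's English description precedes it below -/
import Mathlib

section
/- Let M be a real symmetric n×n matrix and u, v distinct indices with e_u - e_v an eigenvector of M. Then perfect state transfer from u to v at time τ (i.e., |U(τ)_{u,v}| = 1) occurs if and only if U(τ)_{u,u} = 0, where U(τ) = exp(iτM). -/
/-! Since `e_u - e_v` is an eigenvector of `M` with eigenvalue `θ`, it is an eigenvector of
`U(τ) = exp(iτM)` with eigenvalue `e^{iτθ}`; its `u`-th entry gives `U_uu - U_uv = e^{iτθ}`, of
modulus one. As `U(τ)` is unitary, its `u`-th row has unit `ℓ²`-norm, so `|U_uv| = 1` forces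
`U_uu = 0`; conversely `U_uu = 0` gives `|U_uv| = |e^{iτθ}| = 1`. -/

open Matrix Complex

/-- The continuous-time quantum walk transition matrix `U(t) = exp(i t M)`. -/
noncomputable def transU {n : ℕ} (M : Matrix (Fin n) (Fin n) ℝ) (t : ℝ) :
    Matrix (Fin n) (Fin n) ℂ :=
  NormedSpace.exp ((Complex.I * (t : ℂ)) • M.map (fun x => (x : ℂ)))

namespace Matrix

variable {𝕂 m : Type*} [RCLike 𝕂] [Fintype m] [DecidableEq m]

open scoped Norms.Operator in
theorem exp_mulVec_of_mulVec_eq_smul {A : Matrix m m 𝕂} {w : m → 𝕂} {c : 𝕂}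
    (hA : A *ᵥ w = c • w) : NormedSpace.exp A *ᵥ w = NormedSpace.exp c • w := by
  have hpow (k : ℕ) : A ^ k *ᵥ w = c ^ k • w := by
    induction k with
    | zero => simp
    | succ k ih => rw [pow_succ', ← mulVec_mulVec, ih, mulVec_smul, hA, smul_smul, pow_succ]
  have hseries := (NormedSpace.exp_series_hasSum_exp' (𝕂 := 𝕂) A).map
    (mulVec.addMonoidHomLeft w) (continuous_id.matrix_mulVec continuous_const)
  refine hseries.unique ?_
  convert (NormedSpace.exp_series_hasSum_exp' (𝕂 := 𝕂) c).smul_const w using 2 with k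
  simp [mulVec.addMonoidHomLeft, smul_mulVec, hpow, smul_smul]

theorem sum_norm_sq_row_eq_one_of_mem_unitaryGroup {U : Matrix m m 𝕂}
    (hU : U ∈ unitaryGroup m 𝕂) (i : m) : ∑ j, ‖U i j‖ ^ 2 = 1 := by
  have hdiag := congrFun (congrFun (mem_unitaryGroup_iff.mp hU) i) i
  simp only [mul_apply, star_apply, one_apply_eq, RCLike.star_def, RCLike.mul_conj] at hdiag
  exact_mod_cast hdiag

end Matrix

theorem eq_zero_of_norm_eq_one_of_sum_norm_sq_eq_one {𝕂 ι : Type*} [RCLike 𝕂] [Fintype ι]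
    {r : ι → 𝕂} (hr : ∑ j, ‖r j‖ ^ 2 = 1) {u v : ι} (huv : u ≠ v) (hv : ‖r v‖ = 1) :
    r u = 0 := by
  classical
  have hrest : ∑ j ∈ Finset.univ.erase v, ‖r j‖ ^ 2 = 0 := by
    rw [← Finset.add_sum_erase _ _ (Finset.mem_univ v), hv] at hr
    linarith
  have hu := (Finset.sum_eq_zero_iff_of_nonneg fun j _ => sq_nonneg ‖r j‖).mp hrest u
    (Finset.mem_erase.mpr ⟨huv, Finset.mem_univ u⟩)
  simpa using hu

section transU

variable {n : ℕ} {M : Matrix (Fin n) (Fin n) ℝ}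

theorem transU_mem_unitaryGroup (hM : M.IsSymm) (t : ℝ) :
    transU M t ∈ unitaryGroup (Fin n) ℂ := by
  set A : Matrix (Fin n) (Fin n) ℂ := (I * (t : ℂ)) • M.map (fun x => (x : ℂ))
  have hskew : Aᴴ = -A := by
    ext i j
    simp [A, conjTranspose_apply, hM.apply, mul_comm]
  rw [mem_unitaryGroup_iff, transU, star_eq_conjTranspose, ← exp_conjTranspose, hskew,
    Matrix.exp_neg]
  exact mul_nonsing_inv _ ((isUnit_iff_isUnit_det _).mp (isUnit_exp A))

theorem transU_mulVec_of_mulVec_eq_smul {w : Fin n → ℝ} {θ : ℝ} (hw : M *ᵥ w = θ • w)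
    (t : ℝ) :
    transU M t *ᵥ (fun i => (w i : ℂ)) = Complex.exp ((t * θ : ℝ) * I) • fun i => (w i : ℂ) := by
  have hwℂ : M.map (fun x => (x : ℂ)) *ᵥ (fun i => (w i : ℂ)) = (θ : ℂ) • fun i => (w i : ℂ) := by
    ext i
    exact (ofRealHom.map_mulVec M w i).symm.trans (by simp [hw])
  rw [transU, Complex.exp_eq_exp_ℂ]
  apply exp_mulVec_of_mulVec_eq_smul
  rw [smul_mulVec, hwℂ, smul_smul]
  congr 1
  push_cast
  ring

end transU

theorem stmt2 {n : ℕ} (M : Matrix (Fin n) (Fin n) ℝ) (hM : M.IsSymm)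
    (u v : Fin n) (huv : u ≠ v) (θ : ℝ)
    (h : M *ᵥ (Pi.single u 1 - Pi.single v 1) = θ • (Pi.single u 1 - Pi.single v 1))
    (τ : ℝ) :
    ‖transU M τ u v‖ = 1 ↔ transU M τ u u = 0 := by
  have hrow := sum_norm_sq_row_eq_one_of_mem_unitaryGroup (transU_mem_unitaryGroup hM τ) u
  have hdiff : transU M τ u u - transU M τ u v = Complex.exp ((τ * θ : ℝ) * I) := by
    have := congrFun (transU_mulVec_of_mulVec_eq_smul h τ) u
    simpa [mulVec, dotProduct, Pi.single_apply, huv, apply_ite ((↑) : ℝ → ℂ), mul_sub,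
      Finset.sum_sub_distrib] using this
  constructor
  · exact eq_zero_of_norm_eq_one_of_sum_norm_sq_eq_one hrow huv
  · intro huu
    rw [huu, zero_sub] at hdiff
    rw [← norm_neg, hdiff, norm_exp_ofReal_mul_I]
end

section
/- Let m ≥ 2, η ≠ 0, A = η(J_m - I_m) + ωI_m, and U(t) = exp(itA). If m ≥ 3, then there is no time t and no pair of distinct indices u, v with |U(t)_{u,v}| = 1; i.e., the weighted complete graph K_m(ω,η) admits perfect state transfer if and only if m = 2. -/
/-!
Let `P = J / m` be the orthogonal projection onto the all-ones vector. Then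
`A = λ₁ P + λ₂ (1 - P)` with `λ₁ = η (m - 1) + ω` and `λ₂ = ω - η`, so
`U(t) = e^{itλ₁} P + e^{itλ₂} (1 - P)` and every off-diagonal entry equals
`(e^{itλ₁} - e^{itλ₂}) / m`, of modulus `2 |sin (m η t / 2)| / m ≤ 2 / m`.
This is `< 1` once `m ≥ 3`, while for `m = 2` it reaches `1` at `t = π / (2η)`.
-/

open Matrix Complex

/-- The all-ones matrix. -/
def allOnes (m : ℕ) (R : Type*) [One R] : Matrix (Fin m) (Fin m) R :=
  Matrix.of fun _ _ => 1

attribute [local instance] Matrix.linftyOpNormedRing Matrix.linftyOpNormedAlgebra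

open NormedSpace

theorem IsIdempotentElem.smul_add_smul_one_sub_pow {R A : Type*} [CommSemiring R] [Ring A]
    [Algebra R A] {P : A} (hP : IsIdempotentElem P) (a b : R) (n : ℕ) :
    (a • P + b • (1 - P)) ^ n = a ^ n • P + b ^ n • (1 - P) := by
  induction n with
  | zero => simp
  | succ n ih =>
    have hPQ : P * (1 - P) = 0 := by rw [mul_sub, mul_one, hP.eq, sub_self]
    have hQP : (1 - P) * P = 0 := by rw [sub_mul, one_mul, hP.eq, sub_self]
    rw [pow_succ, ih]
    simp only [add_mul, mul_add, smul_mul_smul, hP.eq, hP.one_sub.eq, hPQ, hQP, smul_zero,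
      add_zero, zero_add, pow_succ]

theorem NormedSpace.exp_smul_add_smul_one_sub {𝕂 𝔸 : Type*} [RCLike 𝕂] [NormedRing 𝔸]
    [NormedAlgebra 𝕂 𝔸] [CompleteSpace 𝔸] {P : 𝔸} (hP : IsIdempotentElem P) (a b : 𝕂) :
    exp (a • P + b • (1 - P)) = exp a • P + exp b • (1 - P) := by
  refine (exp_series_hasSum_exp' (𝕂 := 𝕂) _).unique ?_
  convert ((exp_series_hasSum_exp' (𝕂 := 𝕂) a).smul_const P).add
    ((exp_series_hasSum_exp' (𝕂 := 𝕂) b).smul_const (1 - P)) using 2 with n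
  rw [hP.smul_add_smul_one_sub_pow, smul_add, smul_smul, smul_smul, smul_eq_mul, smul_eq_mul]

theorem isIdempotentElem_inv_smul_allOnes (m : ℕ) (𝕂 : Type*) [Field 𝕂] [CharZero 𝕂] :
    IsIdempotentElem ((m : 𝕂)⁻¹ • allOnes m 𝕂) := by
  rcases eq_or_ne m 0 with rfl | hm
  · simp
  have hm' : (m : 𝕂) ≠ 0 := Nat.cast_ne_zero.mpr hm
  ext i j
  simp [Matrix.mul_apply, allOnes, hm']

theorem transU_apply_of_ne {m : ℕ} (η ω t : ℝ) {u v : Fin m} (huv : u ≠ v) :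
    transU (η • (allOnes m ℝ - 1) + ω • 1) t u v
      = (Complex.exp (I * (t * (η * (m - 1) + ω) : ℝ)) - Complex.exp (I * (t * (ω - η) : ℝ)))
        / m := by
  have hm : (m : ℂ) ≠ 0 := Nat.cast_ne_zero.mpr (Fin.pos u).ne'
  have hA : (I * (t : ℂ)) • (η • (allOnes m ℝ - 1) + ω • 1).map (fun x => (x : ℂ))
      = (I * (t * (η * (m - 1) + ω) : ℝ)) • ((m : ℂ)⁻¹ • allOnes m ℂ)
        + (I * (t * (ω - η) : ℝ)) • (1 - (m : ℂ)⁻¹ • allOnes m ℂ) := by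
    ext i j
    rcases eq_or_ne i j with rfl | hij
    · simp [allOnes]
      field_simp
      ring
    · simp [allOnes, hij]
      field_simp
      ring
  rw [transU, hA]
  refine (congrFun₂ (exp_smul_add_smul_one_sub (𝕂 := ℂ)
    (isIdempotentElem_inv_smul_allOnes m ℂ) _ _) u v).trans ?_
  simp [← Complex.exp_eq_exp_ℂ, allOnes, huv]
  ring

theorem norm_transU_apply_of_ne {m : ℕ} (η ω t : ℝ) {u v : Fin m} (huv : u ≠ v) :
    ‖transU (η • (allOnes m ℝ - 1) + ω • 1) t u v‖ = 2 * |Real.sin (t * η * m / 2)| / m := by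
  have hfactor :
      Complex.exp (I * (t * (η * (m - 1) + ω) : ℝ)) - Complex.exp (I * (t * (ω - η) : ℝ))
        = Complex.exp ((t * (ω - η) : ℝ) * I) * (Complex.exp (I * (t * η * m : ℝ)) - 1) := by
    rw [mul_sub_one (Complex.exp _), ← Complex.exp_add]
    congr 2 <;> push_cast <;> ring
  rw [transU_apply_of_ne η ω t huv, hfactor, norm_div, norm_mul, Complex.norm_exp_ofReal_mul_I,
    Complex.norm_exp_I_mul_ofReal_sub_one, one_mul, Complex.norm_natCast, Real.norm_eq_abs,
    abs_mul, abs_two]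

theorem norm_transU_apply_of_ne_le {m : ℕ} (η ω t : ℝ) {u v : Fin m} (huv : u ≠ v) :
    ‖transU (η • (allOnes m ℝ - 1) + ω • 1) t u v‖ ≤ 2 / m := by
  rw [norm_transU_apply_of_ne η ω t huv]
  gcongr
  exact mul_le_of_le_one_right zero_le_two (Real.abs_sin_le_one _)

theorem le_two_of_norm_transU_apply_eq_one {m : ℕ} (η ω t : ℝ) {u v : Fin m} (huv : u ≠ v)
    (h : ‖transU (η • (allOnes m ℝ - 1) + ω • 1) t u v‖ = 1) : m ≤ 2 := by
  have hm : (0 : ℝ) < m := Nat.cast_pos.mpr (Fin.pos u)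
  have hle := norm_transU_apply_of_ne_le η ω t huv
  rw [h, le_div_iff₀ hm, one_mul] at hle
  exact_mod_cast hle

theorem stmt7_general {m : ℕ} (η ω : ℝ) (hη : η ≠ 0)
    (A : Matrix (Fin m) (Fin m) ℝ)
    (hA : A = η • (allOnes m ℝ - 1) + ω • 1) :
    (3 ≤ m → ∀ t : ℝ, ∀ u v : Fin m, u ≠ v → ‖transU A t u v‖ ≠ 1) ∧
    ((∃ t : ℝ, ∃ u v : Fin m, u ≠ v ∧ ‖transU A t u v‖ = 1) ↔ m = 2) := by
  subst hA
  refine ⟨fun hm t u v huv h => ?_, fun ⟨t, u, v, huv, h⟩ => ?_, ?_⟩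
  · have := le_two_of_norm_transU_apply_eq_one η ω t huv h
    omega
  · have := le_two_of_norm_transU_apply_eq_one η ω t huv h
    omega
  · rintro rfl
    refine ⟨Real.pi / (2 * η), 0, 1, by decide, ?_⟩
    have htime : Real.pi / (2 * η) * η * (2 : ℕ) / 2 = Real.pi / 2 := by
      push_cast
      field_simp
    rw [norm_transU_apply_of_ne η ω _ (by decide), htime, Real.sin_pi_div_two]
    norm_num

theorem stmt7 {m : ℕ} (hm : 2 ≤ m) (η ω : ℝ) (hη : η ≠ 0)
    (A : Matrix (Fin m) (Fin m) ℝ)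
    (hA : A = η • (allOnes m ℝ - 1) + ω • 1) :
    (3 ≤ m → ∀ t : ℝ, ∀ u v : Fin m, u ≠ v → ‖transU A t u v‖ ≠ 1) ∧
    ((∃ t : ℝ, ∃ u v : Fin m, u ≠ v ∧ ‖transU A t u v‖ = 1) ↔ m = 2) :=
  stmt7_general η ω hη A hA
end

section
/- Let M be a real symmetric matrix and u an index whose eigenvalue support σ_u(M) has at least three elements. If u is periodic with minimum period ρ, and λ and μ are the largest and smallest eigenvalues in σ_u(M), then ρ > 2π/(λ - μ) (the general lower bound ρ ≥ 2π/(λ-μ) is attained if and only if |σ_u(M)| = 2). -/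
/-!
Write `U(t) = ∑ exp(i t κ) E_κ` and `r_κ = (E_κ)_{uu} = ‖E_κ e_u‖² ≥ 0`, so that
`U(t)_{uu} = ∑ r_κ exp(i t κ)` is a convex combination of unit complex numbers, with `r_κ > 0`
exactly on the eigenvalue support of `u`. Since `ℂ` is strictly convex, `|U(ρ)_{uu}| = 1` forces
all `exp(i ρ κ)` with `κ` in the support to coincide, so any two support eigenvalues `κ' < κ`
satisfy `ρ (κ - κ') ∈ 2πℤ_{>0}`. A third support eigenvalue `ν` strictly between `μ` and `λ`
then gives `ρ (λ - μ) = ρ (λ - ν) + ρ (ν - μ) ≥ 4π`.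
-/

open Matrix Complex

/-- `S, E` constitute the spectral decomposition of the real symmetric matrix `M`
(viewed as a complex matrix): the `E lam` for `lam ∈ S` are mutually orthogonal
Hermitian projections summing to the identity, and `M = ∑ lam • E lam`. -/
def IsSpectralDecompOf {n : ℕ} (M : Matrix (Fin n) (Fin n) ℝ)
    (S : Finset ℝ) (E : ℝ → Matrix (Fin n) (Fin n) ℂ) : Prop :=
  (∀ lam ∈ S, (E lam).IsHermitian ∧ E lam * E lam = E lam) ∧
  (∀ lam ∈ S, ∀ mu ∈ S, lam ≠ mu → E lam * E mu = 0) ∧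
  (∑ lam ∈ S, E lam) = 1 ∧
  M.map (fun x => (x : ℂ)) = ∑ lam ∈ S, (lam : ℂ) • E lam

namespace CompleteOrthogonalIdempotents

variable {ι : Type*} [Fintype ι]

section AlgHom

variable {R A : Type*} [CommSemiring R] [Semiring A] [Algebra R A] {e : ι → A}

def sumSMulAlgHom (he : CompleteOrthogonalIdempotents e) : (ι → R) →ₐ[R] A where
  toFun c := ∑ i, c i • e i
  map_one' := by simpa using he.complete
  map_mul' c d := by
    classical
    simp only [Finset.sum_mul, Finset.mul_sum, smul_mul_smul_comm, he.mul_eq, Pi.mul_apply]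
    simp
  map_zero' := by simp
  map_add' c d := by simp [add_smul, Finset.sum_add_distrib]
  commutes' r := by simp [← Finset.smul_sum, he.complete, Algebra.algebraMap_eq_smul_one]

lemma sumSMulAlgHom_apply (he : CompleteOrthogonalIdempotents e) (c : ι → R) :
    he.sumSMulAlgHom c = ∑ i, c i • e i := rfl

end AlgHom

variable {𝔸 : Type*} [NormedRing 𝔸] [NormedAlgebra ℂ 𝔸] [Algebra ℚ 𝔸] {e : ι → 𝔸}

theorem exp_sum_smul (he : CompleteOrthogonalIdempotents e) (c : ι → ℂ) :
    NormedSpace.exp (∑ i, c i • e i) = ∑ i, Complex.exp (c i) • e i := by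
  have hcont : Continuous (he.sumSMulAlgHom (R := ℂ)) := by
    change Continuous fun c : ι → ℂ => ∑ i, c i • e i
    fun_prop
  rw [← sumSMulAlgHom_apply he, ← NormedSpace.map_exp _ hcont, sumSMulAlgHom_apply]
  simp [Pi.coe_exp, Complex.exp_eq_exp_ℂ]

end CompleteOrthogonalIdempotents

section HermitianIdempotent

variable {n : Type*} [Fintype n] [DecidableEq n]

theorem Matrix.IsHermitian.apply_self_eq_star_dotProduct_of_mul_self {R : Type*} [Semiring R]
    [StarRing R] {P : Matrix n n R} (hP : P.IsHermitian) (hidem : P * P = P) (u : n) :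
    P u u = star (P *ᵥ Pi.single u 1) ⬝ᵥ (P *ᵥ Pi.single u 1) := by
  calc P u u = (Pᴴ * P) u u := by rw [hP.eq, hidem]
    _ = _ := by simp [mul_apply, dotProduct]

open scoped ComplexOrder

variable {𝕜 : Type*} [RCLike 𝕜] {P : Matrix n n 𝕜}

theorem Matrix.IsHermitian.re_apply_self_nonneg_of_mul_self (hP : P.IsHermitian)
    (hidem : P * P = P) (u : n) : 0 ≤ RCLike.re (P u u) := by
  rw [hP.apply_self_eq_star_dotProduct_of_mul_self hidem]
  exact RCLike.nonneg_iff.mp (dotProduct_star_self_nonneg _) |>.1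

theorem Matrix.IsHermitian.re_apply_self_eq_zero_iff_of_mul_self (hP : P.IsHermitian)
    (hidem : P * P = P) (u : n) : RCLike.re (P u u) = 0 ↔ P *ᵥ Pi.single u 1 = 0 := by
  rw [← dotProduct_star_self_eq_zero, ← hP.apply_self_eq_star_dotProduct_of_mul_self hidem]
  conv_rhs => rw [← hP.coe_re_apply_self u]
  exact RCLike.ofReal_eq_zero.symm

end HermitianIdempotent

theorem two_pi_le_sub_of_exp_mul_I_eq {a b : ℝ} (hab : a < b)
    (h : cexp (a * I) = cexp (b * I)) : 2 * Real.pi ≤ b - a := by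
  obtain ⟨k, hk⟩ := Complex.exp_eq_exp_iff_exists_int.mp h
  have hk' : a = b + k * (2 * Real.pi) := by simpa using congrArg Complex.im hk
  have hkneg : (k : ℝ) ≤ -1 := by
    have hk0 : k < 0 := by exact_mod_cast (show (k : ℝ) < 0 by nlinarith [Real.pi_pos])
    exact_mod_cast (show k ≤ -1 by omega)
  nlinarith [Real.pi_pos]

namespace IsSpectralDecompOf

variable {n : ℕ} {M : Matrix (Fin n) (Fin n) ℝ} {S : Finset ℝ} {E : ℝ → Matrix (Fin n) (Fin n) ℂ}

theorem completeOrthogonalIdempotents (hSE : IsSpectralDecompOf M S E) :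
    CompleteOrthogonalIdempotents fun κ : S => E κ where
  idem κ := (hSE.1 κ κ.2).2
  ortho κ κ' hne := hSE.2.1 κ κ.2 κ' κ'.2 (Subtype.coe_ne_coe.mpr hne)
  complete := by rw [Finset.sum_coe_sort S E]; exact hSE.2.2.1

theorem transU_eq (hSE : IsSpectralDecompOf M S E) (t : ℝ) :
    transU M t = ∑ κ ∈ S, cexp (↑(t * κ) * I) • E κ := by
  -- `exp` on matrices depends only on the topology, so any Banach-algebra norm will do.
  let _ := Matrix.linftyOpNormedRing (n := Fin n) (α := ℂ)
  let _ := Matrix.linftyOpNormedAlgebra (n := Fin n) (R := ℂ) (α := ℂ)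
  have hexp := hSE.completeOrthogonalIdempotents.exp_sum_smul fun κ => ↑(t * κ) * I
  rw [Finset.sum_coe_sort S fun κ => (↑(t * κ) * I) • E κ,
    Finset.sum_coe_sort S fun κ => cexp (↑(t * κ) * I) • E κ] at hexp
  rw [transU, hSE.2.2.2, Finset.smul_sum, ← hexp]
  congr 1
  refine Finset.sum_congr rfl fun κ _ => ?_
  rw [smul_smul]
  push_cast
  ring_nf

theorem sum_re_apply_self (hSE : IsSpectralDecompOf M S E) (u : Fin n) :
    ∑ κ ∈ S, (E κ u u).re = 1 := by
  simpa [Matrix.sum_apply] using congrArg (fun A => (A u u).re) hSE.2.2.1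

theorem transU_apply_self (hSE : IsSpectralDecompOf M S E) (t : ℝ) (u : Fin n) :
    transU M t u u = ∑ κ ∈ S, (E κ u u).re • cexp (↑(t * κ) * I) := by
  rw [hSE.transU_eq, Matrix.sum_apply]
  refine Finset.sum_congr rfl fun κ hκ => ?_
  have hre : ((E κ u u).re : ℂ) = E κ u u := (hSE.1 κ hκ).1.coe_re_apply_self u
  rw [Matrix.smul_apply, smul_eq_mul, Complex.real_smul, hre, mul_comm]

theorem exp_mul_I_eq_of_norm_transU_apply_self_eq_one (hSE : IsSpectralDecompOf M S E)
    {t : ℝ} {u : Fin n} (hper : ‖transU M t u u‖ = 1) {κ κ' : ℝ} (hκ : κ ∈ S) (hκ' : κ' ∈ S)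
    (hsκ : E κ *ᵥ Pi.single u 1 ≠ 0) (hsκ' : E κ' *ᵥ Pi.single u 1 ≠ 0) :
    cexp (↑(t * κ) * I) = cexp (↑(t * κ') * I) := by
  have hweight_ne {ν} (hν : ν ∈ S) (hsν : E ν *ᵥ Pi.single u 1 ≠ 0) : (E ν u u).re ≠ 0 :=
    mt ((hSE.1 ν hν).1.re_apply_self_eq_zero_iff_of_mul_self (hSE.1 ν hν).2 u).mp hsν
  by_contra hne
  have hlt := norm_sum_lt_of_strictConvexSpace (r := 1)
    (fun ν hν => (hSE.1 ν hν).1.re_apply_self_nonneg_of_mul_self (hSE.1 ν hν).2 u)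
    (hSE.sum_re_apply_self u) hκ hκ' hne (hweight_ne hκ hsκ) (hweight_ne hκ' hsκ')
    (fun ν _ => (Complex.norm_exp_ofReal_mul_I _).le)
  simp only [RCLike.re_to_complex] at hlt
  rw [← hSE.transU_apply_self] at hlt
  exact hlt.ne hper

end IsSpectralDecompOf

theorem exists_ne_ne_of_pairwise_ne {α : Type*} {a b c : α} (hab : a ≠ b) (hac : a ≠ c)
    (hbc : b ≠ c) (x y : α) : ∃ z, (z = a ∨ z = b ∨ z = c) ∧ z ≠ x ∧ z ≠ y := by
  by_cases ha : a = x ∨ a = y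
  · by_cases hb : b = x ∨ b = y
    · exact ⟨c, by simp, by grind, by grind⟩
    · exact ⟨b, by simp, by tauto, by tauto⟩
  · exact ⟨a, by simp, by tauto, by tauto⟩

theorem stmt11_general {n : ℕ} (M : Matrix (Fin n) (Fin n) ℝ)
    (S : Finset ℝ) (E : ℝ → Matrix (Fin n) (Fin n) ℂ)
    (hSE : IsSpectralDecompOf M S E) (u : Fin n)
    -- the eigenvalue support of `u` has at least three elements
    (lam₁ lam₂ lam₃ : ℝ) (h1 : lam₁ ∈ S) (h2 : lam₂ ∈ S) (h3 : lam₃ ∈ S)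
    (hne12 : lam₁ ≠ lam₂) (hne13 : lam₁ ≠ lam₃) (hne23 : lam₂ ≠ lam₃)
    (hs1 : E lam₁ *ᵥ Pi.single u 1 ≠ 0) (hs2 : E lam₂ *ᵥ Pi.single u 1 ≠ 0)
    (hs3 : E lam₃ *ᵥ Pi.single u 1 ≠ 0)
    -- `lam` and `mu` are the largest and smallest eigenvalues in the support of `u`
    (lam mu : ℝ) (hlam : lam ∈ S) (hmu : mu ∈ S)
    (hslam : E lam *ᵥ Pi.single u 1 ≠ 0) (hsmu : E mu *ᵥ Pi.single u 1 ≠ 0)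
    (hminmax : ∀ kap ∈ S, E kap *ᵥ Pi.single u 1 ≠ 0 → mu ≤ kap ∧ kap ≤ lam)
    -- `u` is periodic with minimum period `ρ`
    (ρ : ℝ) (hρpos : 0 < ρ) (hper : ‖transU M ρ u u‖ = 1) :
    ρ > 2 * Real.pi / (lam - mu) := by
  have hgap {κ κ'} (hκ : κ ∈ S) (hκ' : κ' ∈ S) (hsκ : E κ *ᵥ Pi.single u 1 ≠ 0)
      (hsκ' : E κ' *ᵥ Pi.single u 1 ≠ 0) (hlt : κ' < κ) : 2 * Real.pi ≤ ρ * κ - ρ * κ' :=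
    two_pi_le_sub_of_exp_mul_I_eq (by nlinarith)
      (hSE.exp_mul_I_eq_of_norm_transU_apply_self_eq_one hper hκ' hκ hsκ' hsκ)
  obtain ⟨ν, hν, hνlam, hνmu⟩ := exists_ne_ne_of_pairwise_ne hne12 hne13 hne23 lam mu
  obtain ⟨hνS, hsν⟩ : ν ∈ S ∧ E ν *ᵥ Pi.single u 1 ≠ 0 := by
    rcases hν with rfl | rfl | rfl <;> exact ⟨‹_›, ‹_›⟩
  obtain ⟨hleν, hνle⟩ := hminmax ν hνS hsν
  have hνlt : ν < lam := lt_of_le_of_ne hνle hνlam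
  have hmult : mu < ν := lt_of_le_of_ne hleν (Ne.symm hνmu)
  have hupper := hgap hlam hνS hslam hsν hνlt
  have hlower := hgap hνS hmu hsν hsmu hmult
  rw [gt_iff_lt, div_lt_iff₀ (by linarith)]
  linarith [Real.pi_pos]

theorem stmt11 {n : ℕ} (M : Matrix (Fin n) (Fin n) ℝ) (hM : M.IsSymm)
    (S : Finset ℝ) (E : ℝ → Matrix (Fin n) (Fin n) ℂ)
    (hSE : IsSpectralDecompOf M S E) (u : Fin n)
    -- the eigenvalue support of `u` has at least three elements
    (lam₁ lam₂ lam₃ : ℝ) (h1 : lam₁ ∈ S) (h2 : lam₂ ∈ S) (h3 : lam₃ ∈ S)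
    (hne12 : lam₁ ≠ lam₂) (hne13 : lam₁ ≠ lam₃) (hne23 : lam₂ ≠ lam₃)
    (hs1 : E lam₁ *ᵥ Pi.single u 1 ≠ 0) (hs2 : E lam₂ *ᵥ Pi.single u 1 ≠ 0)
    (hs3 : E lam₃ *ᵥ Pi.single u 1 ≠ 0)
    -- `lam` and `mu` are the largest and smallest eigenvalues in the support of `u`
    (lam mu : ℝ) (hlam : lam ∈ S) (hmu : mu ∈ S)
    (hslam : E lam *ᵥ Pi.single u 1 ≠ 0) (hsmu : E mu *ᵥ Pi.single u 1 ≠ 0)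
    (hminmax : ∀ kap ∈ S, E kap *ᵥ Pi.single u 1 ≠ 0 → mu ≤ kap ∧ kap ≤ lam)
    -- `u` is periodic with minimum period `ρ`
    (ρ : ℝ) (hρpos : 0 < ρ) (hper : ‖transU M ρ u u‖ = 1)
    (hmin : ∀ t : ℝ, 0 < t → ‖transU M t u u‖ = 1 → ρ ≤ t) :
    ρ > 2 * Real.pi / (lam - mu) :=
  stmt11_general M S E hSE u lam₁ lam₂ lam₃ h1 h2 h3 hne12 hne13 hne23 hs1 hs2 hs3 lam mu hlam hmu
    hslam hsmu hminmax ρ hρpos hper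
end

section
/- Let M be a real symmetric matrix and u, v indices with the same eigenvalue support σ_u(M) = σ_v(M). Then u is periodic if and only if v is periodic; moreover, if both are periodic, they have the same minimum period. -/
open Matrix Complex

section OrthogonalIdempotents

variable {R A ι : Type*} [CommSemiring R] [Semiring A] [Algebra R A] {s : Finset ι} {e : ι → A}

theorem sum_smul_mul_sum_smul_of_orthogonal_idempotents
    (hidem : ∀ i ∈ s, e i * e i = e i) (horth : ∀ i ∈ s, ∀ j ∈ s, i ≠ j → e i * e j = 0)
    (c d : ι → R) :
    (∑ i ∈ s, c i • e i) * (∑ i ∈ s, d i • e i) = ∑ i ∈ s, (c i * d i) • e i := by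
  rw [Finset.sum_mul_sum]
  refine Finset.sum_congr rfl fun i hi => ?_
  rw [Finset.sum_eq_single_of_mem i hi fun j hj hji => by
    rw [smul_mul_smul_comm, horth i hi j hj hji.symm, smul_zero]]
  rw [smul_mul_smul_comm, hidem i hi]

theorem sum_smul_pow_of_orthogonal_idempotents
    (hidem : ∀ i ∈ s, e i * e i = e i) (horth : ∀ i ∈ s, ∀ j ∈ s, i ≠ j → e i * e j = 0)
    (hone : ∑ i ∈ s, e i = 1) (c : ι → R) (k : ℕ) :
    (∑ i ∈ s, c i • e i) ^ k = ∑ i ∈ s, c i ^ k • e i := by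
  induction k with
  | zero => simpa using hone.symm
  | succ k ih =>
    rw [pow_succ, ih, sum_smul_mul_sum_smul_of_orthogonal_idempotents hidem horth]
    simp only [pow_succ]

end OrthogonalIdempotents

theorem exp_sum_smul_of_orthogonal_idempotents {A ι : Type*} [Ring A] [Algebra ℂ A]
    [TopologicalSpace A] [IsTopologicalRing A] [ContinuousSMul ℂ A] [T2Space A]
    {s : Finset ι} {e : ι → A}
    (hidem : ∀ i ∈ s, e i * e i = e i) (horth : ∀ i ∈ s, ∀ j ∈ s, i ≠ j → e i * e j = 0)
    (hone : ∑ i ∈ s, e i = 1) (c : ι → ℂ) :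
    NormedSpace.exp (∑ i ∈ s, c i • e i) = ∑ i ∈ s, Complex.exp (c i) • e i := by
  have hsummable (z : ℂ) : Summable fun k : ℕ => (k.factorial⁻¹ : ℂ) * z ^ k := by
    simpa only [smul_eq_mul] using NormedSpace.expSeries_summable' (𝕂 := ℂ) z
  simp_rw [NormedSpace.exp_eq_tsum ℂ, sum_smul_pow_of_orthogonal_idempotents hidem horth hone,
    Finset.smul_sum, smul_smul]
  rw [Summable.tsum_finsetSum fun i _ => (hsummable (c i)).smul_const (e i)]
  refine Finset.sum_congr rfl fun i _ => ?_
  rw [Summable.tsum_smul_const (hsummable (c i)), Complex.exp_eq_exp_ℂ, NormedSpace.exp_eq_tsum ℂ]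
  simp only [smul_eq_mul]

theorem norm_sum_smul_eq_one_iff {V ι : Type*} [NormedAddCommGroup V] [NormedSpace ℝ V]
    [StrictConvexSpace ℝ V] {s : Finset ι} {w : ι → ℝ} {z : ι → V}
    (hw₀ : ∀ i ∈ s, 0 ≤ w i) (hw₁ : ∑ i ∈ s, w i = 1) (hz : ∀ i ∈ s, ‖z i‖ = 1) :
    ‖∑ i ∈ s, w i • z i‖ = 1 ↔ ∀ i ∈ s, ∀ j ∈ s, w i ≠ 0 → w j ≠ 0 → z i = z j := by
  constructor
  · intro h i hi j hj hwi hwj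
    by_contra hij
    exact (norm_sum_lt_of_strictConvexSpace hw₀ hw₁ hi hj hij hwi hwj
      fun k hk => (hz k hk).le).ne h
  · intro hconst
    obtain ⟨i₀, hi₀, hwi₀⟩ := Finset.exists_ne_zero_of_sum_ne_zero (hw₁.trans_ne one_ne_zero)
    have hsum : ∑ i ∈ s, w i • z i = ∑ i ∈ s, w i • z i₀ := by
      refine Finset.sum_congr rfl fun i hi => ?_
      by_cases hwi : w i = 0
      · simp [hwi]
      · rw [hconst i hi i₀ hi₀ hwi hwi₀]
    rw [hsum, ← Finset.sum_smul, hw₁, one_smul, hz i₀ hi₀]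

theorem Matrix.IsHermitian.apply_self_eq_sum_normSq {m : Type*} [Fintype m]
    {P : Matrix m m ℂ} (hP : P.IsHermitian) (hidem : P * P = P) (u : m) :
    P u u = ((∑ j, normSq (P j u) : ℝ) : ℂ) := by
  conv_lhs => rw [← hidem]
  rw [Matrix.mul_apply, Complex.ofReal_sum]
  refine Finset.sum_congr rfl fun j _ => ?_
  rw [← hP.apply j u, Complex.normSq_eq_conj_mul_self]
  simp only [Complex.star_def, Complex.conj_conj]

theorem Matrix.mulVec_single_one_eq_zero_iff_sum_normSq {m : Type*} [Fintype m] [DecidableEq m]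
    (P : Matrix m m ℂ) (u : m) :
    P *ᵥ Pi.single u 1 = 0 ↔ ∑ j, normSq (P j u) = 0 := by
  rw [Matrix.mulVec_single_one, Finset.sum_eq_zero_iff_of_nonneg fun j _ => normSq_nonneg _]
  simp [funext_iff]

section SpectralDecomposition

variable {n : ℕ} {M : Matrix (Fin n) (Fin n) ℝ} {S : Finset ℝ} {E : ℝ → Matrix (Fin n) (Fin n) ℂ}

noncomputable def eigenvalueSupport (S : Finset ℝ) (E : ℝ → Matrix (Fin n) (Fin n) ℂ)
    (u : Fin n) : Finset ℝ :=
  {lam ∈ S | E lam *ᵥ Pi.single u 1 ≠ 0}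

theorem IsSpectralDecompOf.transU_eq_s12 (hSE : IsSpectralDecompOf M S E) (t : ℝ) :
    transU M t = ∑ lam ∈ S, cexp (I * t * lam) • E lam := by
  obtain ⟨hproj, horth, hone, hM⟩ := hSE
  rw [transU, hM, Finset.smul_sum]
  simp_rw [smul_smul]
  exact exp_sum_smul_of_orthogonal_idempotents (fun lam hlam => (hproj lam hlam).2) horth hone _

theorem IsSpectralDecompOf.norm_transU_apply_self_eq_one_iff (hSE : IsSpectralDecompOf M S E)
    (u : Fin n) (t : ℝ) :
    ‖transU M t u u‖ = 1 ↔ ∀ lam ∈ eigenvalueSupport S E u, ∀ mu ∈ eigenvalueSupport S E u,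
      cexp (I * t * lam) = cexp (I * t * mu) := by
  set w : ℝ → ℝ := fun lam => ∑ j, normSq (E lam j u)
  have hdiag : ∀ lam ∈ S, E lam u u = w lam := fun lam hlam =>
    (hSE.1 lam hlam).1.apply_self_eq_sum_normSq (hSE.1 lam hlam).2 u
  have hentry : transU M t u u = ∑ lam ∈ S, w lam • cexp (I * t * lam) := by
    rw [hSE.transU_eq_s12, Matrix.sum_apply]
    refine Finset.sum_congr rfl fun lam hlam => ?_
    rw [Matrix.smul_apply, hdiag lam hlam, smul_eq_mul, real_smul, mul_comm]
  have hw₁ : ∑ lam ∈ S, w lam = 1 := by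
    have h := congrFun (congrFun hSE.2.2.1 u) u
    rw [Matrix.sum_apply, Matrix.one_apply_eq, Finset.sum_congr rfl hdiag] at h
    exact_mod_cast h
  have hunit : ∀ lam ∈ S, ‖cexp (I * t * lam)‖ = 1 := fun lam _ => by
    rw [show I * t * lam = ((t * lam : ℝ) : ℂ) * I by push_cast; ring, norm_exp_ofReal_mul_I]
  rw [hentry, norm_sum_smul_eq_one_iff (fun _ _ => Finset.sum_nonneg fun _ _ => normSq_nonneg _)
    hw₁ hunit]
  simp only [eigenvalueSupport, Finset.mem_filter, ne_eq,
    Matrix.mulVec_single_one_eq_zero_iff_sum_normSq]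
  grind

end SpectralDecomposition

theorem stmt12_general {n : ℕ} (M : Matrix (Fin n) (Fin n) ℝ)
    (S : Finset ℝ) (E : ℝ → Matrix (Fin n) (Fin n) ℂ)
    (hSE : IsSpectralDecompOf M S E) (u v : Fin n)
    -- `u` and `v` have the same eigenvalue support
    (hsupp : ∀ lam ∈ S, (E lam *ᵥ Pi.single u 1 ≠ 0 ↔ E lam *ᵥ Pi.single v 1 ≠ 0)) :
    ((∃ τ : ℝ, 0 < τ ∧ ‖transU M τ u u‖ = 1) ↔
      (∃ τ : ℝ, 0 < τ ∧ ‖transU M τ v v‖ = 1)) ∧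
    ∀ ρ : ℝ,
      ((0 < ρ ∧ ‖transU M ρ u u‖ = 1 ∧
          ∀ t : ℝ, 0 < t → ‖transU M t u u‖ = 1 → ρ ≤ t) ↔
        (0 < ρ ∧ ‖transU M ρ v v‖ = 1 ∧
          ∀ t : ℝ, 0 < t → ‖transU M t v v‖ = 1 → ρ ≤ t)) := by
  have hσ : eigenvalueSupport S E u = eigenvalueSupport S E v := Finset.filter_congr hsupp
  have hperiodic (t : ℝ) : ‖transU M t u u‖ = 1 ↔ ‖transU M t v v‖ = 1 := by
    rw [hSE.norm_transU_apply_self_eq_one_iff, hSE.norm_transU_apply_self_eq_one_iff, hσ]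
  simp only [hperiodic, implies_true, and_self]

theorem stmt12 {n : ℕ} (M : Matrix (Fin n) (Fin n) ℝ) (hM : M.IsSymm)
    (S : Finset ℝ) (E : ℝ → Matrix (Fin n) (Fin n) ℂ)
    (hSE : IsSpectralDecompOf M S E) (u v : Fin n)
    -- `u` and `v` have the same eigenvalue support
    (hsupp : ∀ lam ∈ S, (E lam *ᵥ Pi.single u 1 ≠ 0 ↔ E lam *ᵥ Pi.single v 1 ≠ 0)) :
    ((∃ τ : ℝ, 0 < τ ∧ ‖transU M τ u u‖ = 1) ↔
      (∃ τ : ℝ, 0 < τ ∧ ‖transU M τ v v‖ = 1)) ∧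
    ∀ ρ : ℝ,
      ((0 < ρ ∧ ‖transU M ρ u u‖ = 1 ∧
          ∀ t : ℝ, 0 < t → ‖transU M t u u‖ = 1 → ρ ≤ t) ↔
        (0 < ρ ∧ ‖transU M ρ v v‖ = 1 ∧
          ∀ t : ℝ, 0 < t → ‖transU M t v v‖ = 1 → ρ ≤ t)) :=
  stmt12_general M S E hSE u v hsupp
end

section
/- Let M be a real symmetric matrix, and u, v strongly cospectral indices with σ_u⁻(M) = {θ} and σ_u⁺(M) = {λ₁,...,λ_r}, where λ_j = θ + b_j√Δ for nonzero integers b_j and a squarefree positive integer Δ (or Δ = 1). If the 2-adic valuations ν₂(b_j) are all equal to some q ≥ 0, then perfect state transfer occurs between u and v at time τ = π/(2^q g' √Δ), where g' = gcd(b₁/2^q, ..., b_r/2^q), and this is the minimum PST time. Conversely, if ν₂(b_j) ≠ ν₂(b_k) for some j, k, then perfect state transfer never occurs between u and v. -/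
/-! Projecting onto the eigenspaces of `M`, `U(t) e_u = γ e_v` says exactly that
`e^{itλ_j} = γ` for every `j` and `e^{itθ} = -γ`, i.e. that every `t b_j √Δ` is an odd multiple
of `π`. Two odd multiples of `π` in the ratio `b_j : b_k` force `ν₂(b_j) = ν₂(b_k)`. When all
`ν₂(b_j) = q`, write `b_j = 2^q g' d_j` with `d_j` odd: then `τ` works, and for any PST time `t`
Bézout's identity for `g'` makes `2^q g' √Δ t / π` a positive integer, so `t ≥ τ`. -/

open Matrix Complex

open Nat in
theorem NormedSpace.mul_exp_of_mul_eq_smul {𝕂 𝔸 : Type*} [RCLike 𝕂] [NormedRing 𝔸]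
    [NormedAlgebra 𝕂 𝔸] [CompleteSpace 𝔸] {p x : 𝔸} {a : 𝕂} (h : p * x = a • p) :
    p * NormedSpace.exp x = NormedSpace.exp a • p := by
  have hpow (k : ℕ) : p * x ^ k = a ^ k • p := by
    induction k with
    | zero => simp
    | succ k ih => rw [pow_succ, ← mul_assoc, ih, smul_mul_assoc, h, smul_smul, pow_succ]
  have hterm :
      (fun k : ℕ => p * ((k ! : 𝕂)⁻¹ • x ^ k)) = fun k => ((k ! : 𝕂)⁻¹ • a ^ k) • p := by
    ext k
    rw [mul_smul_comm, hpow, smul_smul, smul_eq_mul]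
  refine ((NormedSpace.exp_series_hasSum_exp' (𝕂 := 𝕂) x).mul_left p).unique ?_
  rw [hterm]
  exact (NormedSpace.exp_series_hasSum_exp' a).smul_const p

theorem Matrix.mul_exp_of_mul_eq_smul {m : Type*} [Fintype m] [DecidableEq m]
    {P X : Matrix m m ℂ} {a : ℂ} (h : P * X = a • P) :
    P * NormedSpace.exp X = Complex.exp a • P := by
  rw [Complex.exp_eq_exp_ℂ]
  exact open scoped Norms.Operator in NormedSpace.mul_exp_of_mul_eq_smul h

namespace IsSpectralDecompOf

variable {n : ℕ} {M : Matrix (Fin n) (Fin n) ℝ} {S : Finset ℝ} {E : ℝ → Matrix (Fin n) (Fin n) ℂ}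

theorem proj_mul_map_ofReal (hSE : IsSpectralDecompOf M S E) {μ : ℝ} (hμ : μ ∈ S) :
    E μ * M.map (fun x => (x : ℂ)) = (μ : ℂ) • E μ := by
  rw [hSE.2.2.2, Finset.mul_sum, Finset.sum_eq_single_of_mem μ hμ]
  · rw [mul_smul_comm, (hSE.1 μ hμ).2]
  · intro ν hν hνμ
    rw [mul_smul_comm, hSE.2.1 μ hμ ν hν (Ne.symm hνμ), smul_zero]

theorem proj_mul_transU (hSE : IsSpectralDecompOf M S E) {μ : ℝ} (hμ : μ ∈ S) (t : ℝ) :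
    E μ * transU M t = cexp (I * t * μ) • E μ := by
  refine Matrix.mul_exp_of_mul_eq_smul ?_
  rw [mul_smul_comm, hSE.proj_mul_map_ofReal hμ, smul_smul]

theorem eq_of_forall_proj_mulVec_eq (hSE : IsSpectralDecompOf M S E) {x y : Fin n → ℂ}
    (h : ∀ μ ∈ S, E μ *ᵥ x = E μ *ᵥ y) : x = y := by
  rw [← one_mulVec x, ← one_mulVec y, ← hSE.2.2.1, sum_mulVec, sum_mulVec]
  exact Finset.sum_congr rfl h

end IsSpectralDecompOf

theorem transU_mulVec_single_eq_smul_iff {n : ℕ} {M : Matrix (Fin n) (Fin n) ℝ} {S : Finset ℝ}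
    {E : ℝ → Matrix (Fin n) (Fin n) ℂ} (hSE : IsSpectralDecompOf M S E) {u v : Fin n}
    {r : ℕ} {lam : Fin r → ℝ} {θ : ℝ} (hθS : θ ∈ S) (hlamS : ∀ j, lam j ∈ S)
    (hplus : ∀ j, E (lam j) *ᵥ Pi.single u 1 = E (lam j) *ᵥ Pi.single v 1 ∧
      E (lam j) *ᵥ Pi.single u 1 ≠ 0)
    (hminus : E θ *ᵥ Pi.single u 1 = -(E θ *ᵥ Pi.single v 1) ∧
      E θ *ᵥ Pi.single u 1 ≠ 0)
    (hrest : ∀ mu ∈ S, mu ∉ Set.range lam → mu ≠ θ →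
      E mu *ᵥ Pi.single u 1 = 0 ∧ E mu *ᵥ Pi.single v 1 = 0)
    (t : ℝ) (γ : ℂ) :
    transU M t *ᵥ Pi.single u 1 = γ • (Pi.single v 1 : Fin n → ℂ) ↔
      (∀ j, cexp (I * t * lam j) = γ) ∧ cexp (I * t * θ) = -γ := by
  have hproj : ∀ μ ∈ S, E μ *ᵥ (transU M t *ᵥ Pi.single u 1)
      = cexp (I * t * μ) • (E μ *ᵥ Pi.single u 1) := fun μ hμ => by
    rw [mulVec_mulVec, hSE.proj_mul_transU hμ, smul_mulVec]
  constructor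
  · intro h
    have hcomp : ∀ μ ∈ S, cexp (I * t * μ) • (E μ *ᵥ Pi.single u 1)
        = γ • (E μ *ᵥ Pi.single v 1) := fun μ hμ => by rw [← hproj μ hμ, h, mulVec_smul]
    refine ⟨fun j => smul_left_injective ℂ (hplus j).2 ?_, smul_left_injective ℂ hminus.2 ?_⟩
    · simpa only [← (hplus j).1] using hcomp (lam j) (hlamS j)
    · change _ • _ = _ • _
      rw [hcomp θ hθS, hminus.1, neg_smul, smul_neg, neg_neg]
  · rintro ⟨hlam, hθ⟩
    refine hSE.eq_of_forall_proj_mulVec_eq fun μ hμ => ?_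
    rw [hproj μ hμ, mulVec_smul]
    by_cases hμlam : μ ∈ Set.range lam
    · obtain ⟨j, rfl⟩ := hμlam
      rw [hlam j, (hplus j).1]
    by_cases hμθ : μ = θ
    · rw [hμθ, hθ, hminus.1, neg_smul, smul_neg, neg_neg]
    · rw [(hrest μ hμ hμlam hμθ).1, (hrest μ hμ hμlam hμθ).2, smul_zero, smul_zero]

def IsOddMultipleOfPi (x : ℝ) : Prop := ∃ m : ℤ, Odd m ∧ x = m * Real.pi

theorem Complex.exp_ofReal_mul_I_eq_neg_one_iff (x : ℝ) :
    cexp (x * I) = -1 ↔ IsOddMultipleOfPi x := by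
  rw [← exp_pi_mul_I, exp_eq_exp_iff_exists_int]
  constructor
  · rintro ⟨k, hk⟩
    refine ⟨2 * k + 1, odd_two_mul_add_one k, ?_⟩
    have hk' : ((x : ℝ) : ℂ) = ((((2 * k + 1 : ℤ) : ℝ) * Real.pi : ℝ) : ℂ) := by
      push_cast
      linear_combination (-I) * hk + ((x : ℂ) - Real.pi - 2 * k * Real.pi) * I_sq
    exact_mod_cast hk'
  · rintro ⟨m, ⟨k, rfl⟩, rfl⟩
    exact ⟨k, by push_cast; ring⟩

theorem exists_antiphase_iff {ι : Type*} (t θ : ℝ) (lam : ι → ℝ) :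
    (∃ γ : ℂ, ‖γ‖ = 1 ∧ (∀ j, cexp (I * t * lam j) = γ) ∧ cexp (I * t * θ) = -γ) ↔
      ∀ j, IsOddMultipleOfPi ((lam j - θ) * t) := by
  have hsplit (j : ι) :
      cexp (I * t * lam j) = cexp (I * t * θ) * cexp (((lam j - θ) * t : ℝ) * I) := by
    rw [← Complex.exp_add]
    push_cast
    ring_nf
  simp_rw [← Complex.exp_ofReal_mul_I_eq_neg_one_iff]
  constructor
  · rintro ⟨γ, -, hlam, hθ⟩ j
    have hγ : -γ ≠ 0 := hθ ▸ Complex.exp_ne_zero _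
    have h := hsplit j
    rw [hlam, hθ] at h
    exact mul_left_cancel₀ hγ (by linear_combination -h)
  · intro h
    refine ⟨-cexp (I * t * θ), ?_, fun j => ?_, (neg_neg _).symm⟩
    · rw [norm_neg, show I * t * θ = (t * θ : ℝ) * I by push_cast; ring, norm_exp_ofReal_mul_I]
    · rw [hsplit, h j, mul_neg_one]

theorem exists_transU_mulVec_single_eq_smul_iff {n : ℕ} {M : Matrix (Fin n) (Fin n) ℝ}
    {S : Finset ℝ} {E : ℝ → Matrix (Fin n) (Fin n) ℂ} (hSE : IsSpectralDecompOf M S E)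
    {u v : Fin n} {r : ℕ} {lam : Fin r → ℝ} {θ : ℝ} (hθS : θ ∈ S) (hlamS : ∀ j, lam j ∈ S)
    (hplus : ∀ j, E (lam j) *ᵥ Pi.single u 1 = E (lam j) *ᵥ Pi.single v 1 ∧
      E (lam j) *ᵥ Pi.single u 1 ≠ 0)
    (hminus : E θ *ᵥ Pi.single u 1 = -(E θ *ᵥ Pi.single v 1) ∧
      E θ *ᵥ Pi.single u 1 ≠ 0)
    (hrest : ∀ mu ∈ S, mu ∉ Set.range lam → mu ≠ θ →
      E mu *ᵥ Pi.single u 1 = 0 ∧ E mu *ᵥ Pi.single v 1 = 0) (t : ℝ) :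
    (∃ γ : ℂ, ‖γ‖ = 1 ∧ transU M t *ᵥ Pi.single u 1 = γ • (Pi.single v 1 : Fin n → ℂ)) ↔
      ∀ j, IsOddMultipleOfPi ((lam j - θ) * t) := by
  simp_rw [transU_mulVec_single_eq_smul_iff hSE hθS hlamS hplus hminus hrest t]
  exact exists_antiphase_iff t θ lam

theorem Int.odd_div_two_pow_padicValInt {b : ℤ} (hb : b ≠ 0) :
    Odd (b / 2 ^ padicValInt 2 b) := by
  have hdvd : (2 : ℤ) ^ padicValInt 2 b ∣ b := by exact_mod_cast padicValInt_dvd (p := 2) b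
  rw [← Int.not_even_iff_odd, even_iff_two_dvd]
  rintro ⟨k, hk⟩
  have hsucc : ((2 : ℕ) : ℤ) ^ (padicValInt 2 b + 1) ∣ b :=
    ⟨k, by rw [Nat.cast_ofNat, pow_succ, mul_assoc, ← hk, Int.mul_ediv_cancel' hdvd]⟩
  have := (padicValInt_dvd_iff (p := 2) _ b).1 hsucc
  omega

theorem padicValInt_two_odd_mul {m b : ℤ} (hm : Odd m) (hb : b ≠ 0) :
    padicValInt 2 (m * b) = padicValInt 2 b := by
  have hm2 : ¬((2 : ℕ) : ℤ) ∣ m := by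
    rw [Nat.cast_ofNat, ← even_iff_two_dvd, Int.not_even_iff_odd]
    exact hm
  rw [padicValInt.mul (by rintro rfl; exact hm2 (dvd_zero _)) hb,
    padicValInt.eq_zero_of_not_dvd hm2, zero_add]

theorem Finset.exists_intCast_mul_gcd_eq {ι R : Type*} [CommRing R] (s : Finset ι) (c : ι → ℤ)
    {x : R} (h : ∀ j ∈ s, ∃ m : ℤ, x * c j = m) : ∃ m : ℤ, x * (s.gcd c : ℤ) = m := by
  obtain ⟨a, ha⟩ := s.gcd_eq_sum_mul c
  choose! m hm using h
  refine ⟨∑ j ∈ s, m j * a j, ?_⟩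
  rw [ha]
  push_cast
  rw [Finset.mul_sum]
  exact Finset.sum_congr rfl fun j hj => by rw [← mul_assoc, hm j hj]

theorem exists_odd_eq_two_pow_mul_gcd {ι : Type*} {s : Finset ι} {b : ι → ℤ} {q : ℕ}
    (hb : ∀ j ∈ s, b j ≠ 0) (hq : ∀ j ∈ s, padicValInt 2 (b j) = q) {j : ι} (hj : j ∈ s) :
    ∃ d : ℤ, Odd d ∧ b j = 2 ^ q * s.gcd (fun i => b i / 2 ^ q) * d := by
  have hodd : Odd (b j / 2 ^ q) := hq j hj ▸ Int.odd_div_two_pow_padicValInt (hb j hj)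
  obtain ⟨d, hd⟩ := Finset.gcd_dvd (f := fun i => b i / 2 ^ q) hj
  refine ⟨d, Int.Odd.of_mul_right (hd ▸ hodd), ?_⟩
  have hdvd : (2 : ℤ) ^ q ∣ b j := by exact_mod_cast hq j hj ▸ padicValInt_dvd (p := 2) (b j)
  rw [mul_assoc, ← hd, Int.mul_ediv_cancel' hdvd]

theorem padicValInt_eq_of_isOddMultipleOfPi {b₁ b₂ : ℤ} (hb₁ : b₁ ≠ 0) (hb₂ : b₂ ≠ 0)
    {w t : ℝ} (h₁ : IsOddMultipleOfPi (b₁ * w * t)) (h₂ : IsOddMultipleOfPi (b₂ * w * t)) :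
    padicValInt 2 b₁ = padicValInt 2 b₂ := by
  obtain ⟨m₁, hm₁, e₁⟩ := h₁
  obtain ⟨m₂, hm₂, e₂⟩ := h₂
  have hcross : m₁ * b₂ = m₂ * b₁ := by
    have : ((m₁ * b₂ : ℤ) : ℝ) * Real.pi = ((m₂ * b₁ : ℤ) : ℝ) * Real.pi := by
      push_cast
      linear_combination b₁ * e₂ - b₂ * e₁
    exact_mod_cast mul_right_cancel₀ Real.pi_ne_zero this
  rw [← padicValInt_two_odd_mul hm₂ hb₁, ← hcross, padicValInt_two_odd_mul hm₁ hb₂]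

theorem isLeast_isOddMultipleOfPi_of_padicValInt_eq {ι : Type*} [Fintype ι] [Nonempty ι]
    {b : ι → ℤ} (hb : ∀ j, b j ≠ 0) {q : ℕ} (hq : ∀ j, padicValInt 2 (b j) = q)
    {w : ℝ} (hw : 0 < w) :
    IsLeast {t | 0 < t ∧ ∀ j, IsOddMultipleOfPi (b j * w * t)}
      (Real.pi / (2 ^ q * ((Finset.univ.gcd fun j => b j / 2 ^ q : ℤ) : ℝ) * w)) := by
  set g : ℤ := Finset.univ.gcd fun j => b j / 2 ^ q
  have hodd (j : ι) : ∃ d : ℤ, Odd d ∧ b j = 2 ^ q * g * d :=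
    exists_odd_eq_two_pow_mul_gcd (fun j _ => hb j) (fun j _ => hq j) (Finset.mem_univ j)
  have hg : (0 : ℝ) < g := by
    obtain ⟨d, -, e⟩ := hodd (Classical.arbitrary ι)
    have hg0 : g ≠ 0 := fun h => hb _ (by rw [e, h, mul_zero, zero_mul])
    exact_mod_cast (Int.nonneg_of_normalize_eq_self Finset.normalize_gcd).lt_of_ne' hg0
  refine ⟨⟨by positivity, fun j => ?_⟩, ?_⟩
  · obtain ⟨d, hd, e⟩ := hodd j
    exact ⟨d, hd, by rw [e]; push_cast; field_simp⟩
  · rintro t ⟨ht, h⟩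
    unfold IsOddMultipleOfPi at h
    choose m _ hm using h
    have hint (j : ι) (_ : j ∈ Finset.univ) :
        ∃ k : ℤ, 2 ^ q * w * t / Real.pi * ((b j / 2 ^ q : ℤ) : ℝ) = k := by
      have hdvd : (2 : ℤ) ^ q ∣ b j := by exact_mod_cast hq j ▸ padicValInt_dvd (p := 2) (b j)
      refine ⟨m j, ?_⟩
      have hmj := hm j
      rw [← Int.mul_ediv_cancel' hdvd] at hmj
      push_cast at hmj
      field_simp
      linear_combination hmj
    obtain ⟨N, hN⟩ : ∃ N : ℤ, 2 ^ q * w * t / Real.pi * g = N :=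
      Finset.univ.exists_intCast_mul_gcd_eq _ hint
    have hN1 : (1 : ℝ) ≤ N := by
      have hNpos : (0 : ℝ) < N := hN ▸ by positivity
      exact_mod_cast (Int.cast_pos.1 hNpos : (0 : ℤ) < N)
    rw [div_le_iff₀ (by positivity)]
    calc Real.pi ≤ N * Real.pi := le_mul_of_one_le_left Real.pi_pos.le hN1
      _ = t * (2 ^ q * g * w) := by rw [← hN]; field_simp

theorem stmt14_general {n : ℕ} (M : Matrix (Fin n) (Fin n) ℝ)
    (S : Finset ℝ) (E : ℝ → Matrix (Fin n) (Fin n) ℂ)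
    (hSE : IsSpectralDecompOf M S E) (u v : Fin n)
    (r : ℕ) (hr : 0 < r) (lam : Fin r → ℝ)
    (θ : ℝ) (hθS : θ ∈ S) (hlamS : ∀ j, lam j ∈ S)
    -- σ_u⁺(M) = {lam 1, ..., lam r}
    (hplus : ∀ j, E (lam j) *ᵥ Pi.single u 1 = E (lam j) *ᵥ Pi.single v 1 ∧
      E (lam j) *ᵥ Pi.single u 1 ≠ 0)
    -- σ_u⁻(M) = {θ}
    (hminus : E θ *ᵥ Pi.single u 1 = -(E θ *ᵥ Pi.single v 1) ∧
      E θ *ᵥ Pi.single u 1 ≠ 0)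
    (hrest : ∀ mu ∈ S, mu ∉ Set.range lam → mu ≠ θ →
      E mu *ᵥ Pi.single u 1 = 0 ∧ E mu *ᵥ Pi.single v 1 = 0)
    -- lam j = θ + b j √Δ with b j nonzero integers and Δ = 1 or squarefree Δ > 1
    (b : Fin r → ℤ) (hb : ∀ j, b j ≠ 0)
    (Δ : ℕ) (hΔ : Δ = 1 ∨ (1 < Δ ∧ Squarefree Δ))
    (hform : ∀ j, lam j = θ + (b j : ℝ) * Real.sqrt Δ) :
    -- equal 2-adic valuations: PST at time π/(2^q g' √Δ), and it is the minimum PST time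
    (∀ q : ℕ, (∀ j, padicValInt 2 (b j) = q) →
      letI g' : ℤ := Finset.univ.gcd (fun j => b j / 2 ^ q)
      letI τ : ℝ := Real.pi / (2 ^ q * (g' : ℝ) * Real.sqrt Δ)
      (∃ γ : ℂ, ‖γ‖ = 1 ∧
        transU M τ *ᵥ Pi.single u 1 = γ • (Pi.single v 1 : Fin n → ℂ)) ∧
      (∀ τ' : ℝ, 0 < τ' →
        (∃ γ : ℂ, ‖γ‖ = 1 ∧
          transU M τ' *ᵥ Pi.single u 1 = γ • (Pi.single v 1 : Fin n → ℂ)) → τ ≤ τ')) ∧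
    -- unequal 2-adic valuations: no PST at any time
    ((∃ j k, padicValInt 2 (b j) ≠ padicValInt 2 (b k)) →
      ∀ τ : ℝ, ¬∃ γ : ℂ, ‖γ‖ = 1 ∧
        transU M τ *ᵥ Pi.single u 1 = γ • (Pi.single v 1 : Fin n → ℂ)) := by
  have hpst (t : ℝ) : (∃ γ : ℂ, ‖γ‖ = 1 ∧
      transU M t *ᵥ Pi.single u 1 = γ • (Pi.single v 1 : Fin n → ℂ)) ↔
      ∀ j, IsOddMultipleOfPi (b j * √Δ * t) := by
    rw [exists_transU_mulVec_single_eq_smul_iff hSE hθS hlamS hplus hminus hrest]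
    simp only [hform, add_sub_cancel_left]
  have hΔpos : 0 < √(Δ : ℝ) := Real.sqrt_pos.2 (by rcases hΔ with rfl | ⟨h, -⟩ <;> positivity)
  refine ⟨fun q hq => ?_, fun ⟨j, k, hjk⟩ τ hτ => ?_⟩
  · have : Nonempty (Fin r) := ⟨⟨0, hr⟩⟩
    have hleast := isLeast_isOddMultipleOfPi_of_padicValInt_eq hb hq hΔpos
    simp only [hpst]
    exact ⟨hleast.1.2, fun τ' hτ' h => hleast.2 ⟨hτ', h⟩⟩
  · rw [hpst] at hτ
    exact hjk (padicValInt_eq_of_isOddMultipleOfPi (hb j) (hb k) (hτ j) (hτ k))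

theorem stmt14 {n : ℕ} (M : Matrix (Fin n) (Fin n) ℝ) (hM : M.IsSymm)
    (S : Finset ℝ) (E : ℝ → Matrix (Fin n) (Fin n) ℂ)
    (hSE : IsSpectralDecompOf M S E) (u v : Fin n) (huv : u ≠ v)
    (r : ℕ) (hr : 0 < r) (lam : Fin r → ℝ) (hinj : Function.Injective lam)
    (θ : ℝ) (hθS : θ ∈ S) (hlamS : ∀ j, lam j ∈ S) (hθlam : ∀ j, θ ≠ lam j)
    -- σ_u⁺(M) = {lam 1, ..., lam r}
    (hplus : ∀ j, E (lam j) *ᵥ Pi.single u 1 = E (lam j) *ᵥ Pi.single v 1 ∧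
      E (lam j) *ᵥ Pi.single u 1 ≠ 0)
    -- σ_u⁻(M) = {θ}
    (hminus : E θ *ᵥ Pi.single u 1 = -(E θ *ᵥ Pi.single v 1) ∧
      E θ *ᵥ Pi.single u 1 ≠ 0)
    (hrest : ∀ mu ∈ S, mu ∉ Set.range lam → mu ≠ θ →
      E mu *ᵥ Pi.single u 1 = 0 ∧ E mu *ᵥ Pi.single v 1 = 0)
    -- lam j = θ + b j √Δ with b j nonzero integers and Δ = 1 or squarefree Δ > 1
    (b : Fin r → ℤ) (hb : ∀ j, b j ≠ 0)
    (Δ : ℕ) (hΔ : Δ = 1 ∨ (1 < Δ ∧ Squarefree Δ))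
    (hform : ∀ j, lam j = θ + (b j : ℝ) * Real.sqrt Δ) :
    -- equal 2-adic valuations: PST at time π/(2^q g' √Δ), and it is the minimum PST time
    (∀ q : ℕ, (∀ j, padicValInt 2 (b j) = q) →
      letI g' : ℤ := Finset.univ.gcd (fun j => b j / 2 ^ q)
      letI τ : ℝ := Real.pi / (2 ^ q * (g' : ℝ) * Real.sqrt Δ)
      (∃ γ : ℂ, ‖γ‖ = 1 ∧
        transU M τ *ᵥ Pi.single u 1 = γ • (Pi.single v 1 : Fin n → ℂ)) ∧
      (∀ τ' : ℝ, 0 < τ' →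
        (∃ γ : ℂ, ‖γ‖ = 1 ∧
          transU M τ' *ᵥ Pi.single u 1 = γ • (Pi.single v 1 : Fin n → ℂ)) → τ ≤ τ')) ∧
    -- unequal 2-adic valuations: no PST at any time
    ((∃ j k, padicValInt 2 (b j) ≠ padicValInt 2 (b k)) →
      ∀ τ : ℝ, ¬∃ γ : ℂ, ‖γ‖ = 1 ∧
        transU M τ *ᵥ Pi.single u 1 = γ • (Pi.single v 1 : Fin n → ℂ)) :=
  stmt14_general M S E hSE u v r hr lam θ hθS hlamS hplus hminus hrest b hb Δ hΔ hform
end
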